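/- Let p be a prime, F a field of characteristic p, B a commutative unital F-algebra, α ∈ B, h ∈ B[x], and let L be the unital B-subalgebra of M_p(B) generated by C_α = αI_p + A₀ and D_α = B₀·h(C_α). Then h(α)^{2(p−1)}·M_p(B) ⊆ L, i.e., for every matrix M ∈ M_p(B), h(α)^{2(p−1)}·M ∈ L. -/

import Mathlib

open Matrix Polynomial

section Aux
variable {p : ℕ} {B : Type*} [CommRing B]

lemma aux_A0_apply (A0 : Matrix (Fin p) (Fin p) B)
    (hA0 : A0 = ∑ i : Fin p, if hi : (i : ℕ) + 1 < p then
      Matrix.single ⟨(i : ℕ) + 1, hi⟩ i (1 : B) else 0)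
    (r c : Fin p) : A0 r c = if (r:ℕ) = (c:ℕ)+1 then 1 else 0 := by
  rw [hA0, Matrix.sum_apply]
  by_cases hrc : (r:ℕ) = (c:ℕ)+1
  · have hc1 : (c:ℕ)+1 < p := hrc ▸ r.isLt
    rw [Finset.sum_eq_single c]
    · rw [dif_pos hc1, if_pos hrc]
      have : r = ⟨(c:ℕ)+1, hc1⟩ := Fin.ext hrc
      rw [this, Matrix.single_apply_same]
    · intro i _ hic
      split
      · exact Matrix.single_apply_of_ne _ _ _ _ _ (by
          rintro ⟨-, rfl⟩; exact hic rfl)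
      · rfl
    · intro hmem; exact absurd (Finset.mem_univ c) hmem
  · rw [if_neg hrc]
    apply Finset.sum_eq_zero
    intro i _
    split
    · exact Matrix.single_apply_of_ne _ _ _ _ _ (by
        rintro ⟨h1, rfl⟩
        exact hrc (by rw [← h1]))
    · rfl

lemma aux_B0_apply (B0 : Matrix (Fin p) (Fin p) B)
    (hB0 : B0 = ∑ i : Fin p, if hi : (i : ℕ) + 1 < p then
      (((i : ℕ) + 1 : B)) • Matrix.single i ⟨(i : ℕ) + 1, hi⟩ (1 : B) else 0)
    (r c : Fin p) : B0 r c = if (c:ℕ) = (r:ℕ)+1 then ((r:ℕ)+1 : B) else 0 := by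
  rw [hB0, Matrix.sum_apply]
  by_cases hrc : (c:ℕ) = (r:ℕ)+1
  · have hr1 : (r:ℕ)+1 < p := hrc ▸ c.isLt
    rw [Finset.sum_eq_single r]
    · rw [dif_pos hr1, if_pos hrc, Matrix.smul_apply]
      have : c = ⟨(r:ℕ)+1, hr1⟩ := Fin.ext hrc
      rw [this, Matrix.single_apply_same, smul_eq_mul, mul_one]
    · intro i _ hic
      split
      · rw [Matrix.smul_apply, Matrix.single_apply_of_ne _ _ _ _ _ (by
          rintro ⟨rfl, -⟩; exact hic rfl), smul_zero]
      · rfl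
    · intro hmem; exact absurd (Finset.mem_univ r) hmem
  · rw [if_neg hrc]
    apply Finset.sum_eq_zero
    intro i _
    split
    · rw [Matrix.smul_apply, Matrix.single_apply_of_ne _ _ _ _ _ (by
        rintro ⟨rfl, h2⟩
        exact hrc (by rw [← h2])), smul_zero]
    · rfl

lemma aux_A0_pow (A0 : Matrix (Fin p) (Fin p) B)
    (hA : ∀ r c : Fin p, A0 r c = if (r:ℕ) = (c:ℕ)+1 then 1 else 0) (d : ℕ) :
    ∀ r c : Fin p, (A0 ^ d) r c = if (r:ℕ) = (c:ℕ) + d then 1 else 0 := by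
  induction d with
  | zero =>
    intro r c
    simp [Matrix.one_apply, Fin.ext_iff, eq_comm]
  | succ d ih =>
    intro r c
    rw [pow_succ', Matrix.mul_apply]
    by_cases hcd : (c:ℕ) + d < p
    · rw [Finset.sum_eq_single (⟨(c:ℕ)+d, hcd⟩ : Fin p)]
      · rw [hA, ih]
        simp only [if_pos rfl, mul_one]
        norm_num [Nat.add_assoc]
      · intro k _ hk
        rw [ih, if_neg (by simpa [Fin.ext_iff] using hk), mul_zero]
      · intro hmem; exact absurd (Finset.mem_univ _) hmem
    · rw [if_neg (by omega), Finset.sum_eq_zero]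
      intro k _
      rw [ih, if_neg (by omega), mul_zero]

lemma aux_low_mul (m m' : Matrix (Fin p) (Fin p) B)
    (hm : ∀ r c : Fin p, (r:ℕ) < (c:ℕ) → m r c = 0)
    (hm' : ∀ r c : Fin p, (r:ℕ) < (c:ℕ) → m' r c = 0) :
    ∀ r c : Fin p, (r:ℕ) < (c:ℕ) → (m * m') r c = 0 := by
  intro r c hrc
  rw [Matrix.mul_apply]
  apply Finset.sum_eq_zero
  intro k _
  by_cases hk : (k:ℕ) ≤ (r:ℕ)
  · rw [hm' k c (by omega), mul_zero]
  · rw [hm r k (by omega), zero_mul]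

lemma aux_diag_mul (m m' : Matrix (Fin p) (Fin p) B)
    (hm : ∀ r c : Fin p, (r:ℕ) < (c:ℕ) → m r c = 0)
    (hm' : ∀ r c : Fin p, (r:ℕ) < (c:ℕ) → m' r c = 0) :
    ∀ j : Fin p, (m * m') j j = m j j * m' j j := by
  intro j
  rw [Matrix.mul_apply]
  rw [Finset.sum_eq_single j]
  · intro k _ hk
    have hkj : (k:ℕ) ≠ (j:ℕ) := fun hh => hk (Fin.ext hh)
    by_cases hk2 : (k:ℕ) ≤ (j:ℕ)
    · rw [hm' k j (by omega), mul_zero]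
    · rw [hm j k (by omega), zero_mul]
  · intro hmem; exact absurd (Finset.mem_univ _) hmem

lemma aux_prod_low (l : List (Matrix (Fin p) (Fin p) B))
    (hl : ∀ m ∈ l, ∀ r c : Fin p, (r:ℕ) < (c:ℕ) → m r c = 0) :
    ∀ r c : Fin p, (r:ℕ) < (c:ℕ) → l.prod r c = 0 := by
  induction l with
  | nil => intro r c hrc; rw [List.prod_nil, Matrix.one_apply_ne (fun hh => by
      rw [hh] at hrc; omega)]
  | cons a l ih =>
    rw [List.prod_cons]
    exact aux_low_mul a l.prod (hl a (List.mem_cons_self))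
      (ih fun m hm => hl m (List.mem_cons_of_mem a hm))

lemma aux_prod_diag (l : List (Matrix (Fin p) (Fin p) B))
    (hl : ∀ m ∈ l, ∀ r c : Fin p, (r:ℕ) < (c:ℕ) → m r c = 0) :
    ∀ j : Fin p, l.prod j j = (l.map (fun m => m j j)).prod := by
  induction l with
  | nil => intro j; rw [List.prod_nil, List.map_nil, List.prod_nil, Matrix.one_apply_eq]
  | cons a l ih =>
    intro j
    rw [List.prod_cons, List.map_cons, List.prod_cons,
      aux_diag_mul a l.prod (hl a (List.mem_cons_self))
        (aux_prod_low l (fun m hm => hl m (List.mem_cons_of_mem a hm))),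
      ih (fun m hm => hl m (List.mem_cons_of_mem a hm))]

lemma aux_prod_dvd (e : B) (l : List (Matrix (Fin p) (Fin p) B))
    (hl : ∀ m ∈ l, ∀ r c : Fin p, (r:ℕ) < (c:ℕ) → m r c = 0)
    (hd : ∀ m ∈ l, ∀ j : Fin p, e ∣ m j j) :
    ∀ r c : Fin p, e ^ (l.length - ((r:ℕ) - (c:ℕ))) ∣ l.prod r c := by
  induction l with
  | nil => intro r c; simp
  | cons a l ih =>
    intro r c
    have hlow := fun m hm => hl m (List.mem_cons_of_mem a hm)
    have hdvd := fun m hm => hd m (List.mem_cons_of_mem a hm)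
    have halow := hl a (List.mem_cons_self)
    rw [List.prod_cons, Matrix.mul_apply]
    apply Finset.dvd_sum
    intro k _
    by_cases hk1 : (r:ℕ) < (k:ℕ)
    · rw [halow r k hk1, zero_mul]; exact dvd_zero _
    by_cases hk2 : (k:ℕ) = (r:ℕ)
    · obtain ⟨g, hg⟩ := hd a (List.mem_cons_self) k
      have hkr : k = r := Fin.ext hk2
      subst hkr
      rw [hg]
      obtain ⟨g', hg'⟩ := ih hlow hdvd k c
      rw [hg']
      have : (a :: l).length - ((k:ℕ) - (c:ℕ)) ≤
          (l.length - ((k:ℕ) - (c:ℕ))) + 1 := by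
        simp only [List.length_cons]; omega
      exact dvd_trans (pow_dvd_pow e this)
        ⟨g * g', by rw [pow_succ]; ring⟩
    · by_cases hk3 : (k:ℕ) < (c:ℕ)
      · rw [aux_prod_low l hlow k c hk3, mul_zero]; exact dvd_zero _
      · obtain ⟨g', hg'⟩ := ih hlow hdvd k c
        rw [hg']
        have hle : (a :: l).length - ((r:ℕ) - (c:ℕ)) ≤
            l.length - ((k:ℕ) - (c:ℕ)) := by
          simp only [List.length_cons]; omega
        exact Dvd.dvd.mul_left
          (Dvd.dvd.mul_right (pow_dvd_pow e hle) g') _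
end Aux

theorem stmt14 (p : ℕ) (hp : p.Prime) (F : Type*) [Field F] [CharP F p]
    (B : Type*) [CommRing B] [Algebra F B] (α : B) (h : Polynomial B)
    (A0 B0 : Matrix (Fin p) (Fin p) B)
    (hA0 : A0 = ∑ i : Fin p, if hi : (i : ℕ) + 1 < p then
      Matrix.single ⟨(i : ℕ) + 1, hi⟩ i (1 : B) else 0)
    (hB0 : B0 = ∑ i : Fin p, if hi : (i : ℕ) + 1 < p then
      (((i : ℕ) + 1 : B)) • Matrix.single i ⟨(i : ℕ) + 1, hi⟩ (1 : B) else 0)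
    (Cα Dα : Matrix (Fin p) (Fin p) B)
    (hC : Cα = α • (1 : Matrix (Fin p) (Fin p) B) + A0)
    (hD : Dα = B0 * Polynomial.aeval Cα h)
    (M : Matrix (Fin p) (Fin p) B) :
    (Polynomial.eval α h) ^ (2 * (p - 1)) • M ∈
      Algebra.adjoin B ({Cα, Dα} : Set (Matrix (Fin p) (Fin p) B)) := by
  classical
  have hp0 : 0 < p := hp.pos
  set e : B := Polynomial.eval α h with he
  set L : Subalgebra B (Matrix (Fin p) (Fin p) B) :=
    Algebra.adjoin B ({Cα, Dα} : Set (Matrix (Fin p) (Fin p) B)) with hLdef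
  have hCL : Cα ∈ L := Algebra.subset_adjoin (Set.mem_insert _ _)
  have hDL : Dα ∈ L := Algebra.subset_adjoin (Set.mem_insert_of_mem _ rfl)
  have hA := aux_A0_apply A0 hA0
  have hB := aux_B0_apply B0 hB0
  have hA0L : A0 ∈ L := by
    have hsub : A0 = Cα - α • 1 := by rw [hC]; abel
    rw [hsub]
    exact sub_mem hCL (L.smul_mem L.one_mem α)
  -- units
  have hunit : ∀ a b : ℕ, a < p → b < p → a ≠ b → IsUnit ((a : B) - (b : B)) := by
    intro a b ha hb hab
    have h1 : ((a : F) - (b : F)) ≠ 0 := by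
      intro hzero
      have : (a : F) = (b : F) := sub_eq_zero.mp hzero
      rw [CharP.natCast_eq_natCast F p] at this
      exact hab (Nat.ModEq.eq_of_lt_of_lt this ha hb)
    have h2 : IsUnit ((a : F) - (b : F)) := isUnit_iff_ne_zero.mpr h1
    have h3 := h2.map (algebraMap F B)
    rwa [map_sub, map_natCast, map_natCast] at h3
  -- H
  set H : Matrix (Fin p) (Fin p) B := Polynomial.aeval Cα h with hHdef
  have hHL : H ∈ L := by
    have h1 : H ∈ Algebra.adjoin B {Cα} := by
      rw [Algebra.adjoin_singleton_eq_range_aeval]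
      exact ⟨h, rfl⟩
    exact Algebra.adjoin_mono (Set.singleton_subset_iff.mpr (Set.mem_insert _ _)) h1
  have hClow : ∀ r c : Fin p, (r:ℕ) < (c:ℕ) → Cα r c = 0 := by
    intro r c hrc
    rw [hC, Matrix.add_apply, Matrix.smul_apply, Matrix.one_apply_ne (fun hh => by
      rw [hh] at hrc; omega), hA, if_neg (by omega), smul_zero, add_zero]
  have hCdiag : ∀ j : Fin p, Cα j j = α := by
    intro j
    rw [hC, Matrix.add_apply, Matrix.smul_apply, Matrix.one_apply_eq, hA,
      if_neg (by omega), smul_eq_mul, mul_one, add_zero]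
  have hCpow : ∀ i : ℕ, (∀ r c : Fin p, (r:ℕ) < (c:ℕ) → (Cα ^ i) r c = 0) ∧
      (∀ j : Fin p, (Cα ^ i) j j = α ^ i) := by
    intro i
    induction i with
    | zero =>
      constructor
      · intro r c hrc; rw [pow_zero, Matrix.one_apply_ne (fun hh => by
          rw [hh] at hrc; omega)]
      · intro j; rw [pow_zero, pow_zero, Matrix.one_apply_eq]
    | succ i ih =>
      constructor
      · intro r c hrc
        rw [pow_succ]
        exact aux_low_mul _ _ ih.1 hClow r c hrc
      · intro j
        rw [pow_succ, aux_diag_mul _ _ ih.1 hClow, ih.2, hCdiag, pow_succ]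
  have hHlow : ∀ r c : Fin p, (r:ℕ) < (c:ℕ) → H r c = 0 := by
    intro r c hrc
    rw [hHdef, Polynomial.aeval_eq_sum_range, Matrix.sum_apply]
    apply Finset.sum_eq_zero
    intro i _
    rw [Matrix.smul_apply, (hCpow i).1 r c hrc, smul_zero]
  have hHdiag : ∀ j : Fin p, H j j = e := by
    intro j
    rw [hHdef, Polynomial.aeval_eq_sum_range, Matrix.sum_apply, he,
      Polynomial.eval_eq_sum_range]
    apply Finset.sum_congr rfl
    intro i _
    rw [Matrix.smul_apply, (hCpow i).2, smul_eq_mul]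
  -- D entries
  have hDrow : ∀ (k r : Fin p), (k:ℕ)+1 = (r:ℕ) → ∀ c' : Fin p,
      Dα k c' = (((k:ℕ) : B) + 1) * H r c' := by
    intro k r hkr c'
    rw [hD, Matrix.mul_apply]
    rw [Finset.sum_eq_single r]
    · rw [hB, if_pos (by omega)]
    · intro x _ hx
      rw [hB, if_neg (by
        intro hh
        exact hx (Fin.ext (by omega))), zero_mul]
    · intro hmem; exact absurd (Finset.mem_univ _) hmem
  have hDlastrow : ∀ (j : Fin p), (j:ℕ)+1 = p → ∀ c' : Fin p, Dα j c' = 0 := by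
    intro j hj c'
    rw [hD, Matrix.mul_apply]
    apply Finset.sum_eq_zero
    intro k _
    rw [hB, if_neg (by omega), zero_mul]
  -- W
  set W : Matrix (Fin p) (Fin p) B := A0 * Dα with hWdef
  have hWL : W ∈ L := mul_mem hA0L hDL
  have hW : ∀ r c : Fin p, W r c = ((r:ℕ) : B) * H r c := by
    intro r c
    rw [hWdef, Matrix.mul_apply]
    by_cases hr : (r:ℕ) = 0
    · rw [Finset.sum_eq_zero, hr]
      · rw [Nat.cast_zero, zero_mul]
      · intro k _
        rw [hA, if_neg (by omega), zero_mul]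
    · have hr1 : (r:ℕ) - 1 < p := by omega
      rw [Finset.sum_eq_single (⟨(r:ℕ)-1, hr1⟩ : Fin p)]
      · rw [hA, if_pos (by simp; omega)]
        rw [one_mul, hDrow ⟨(r:ℕ)-1, hr1⟩ r (by simp; omega) c]
        congr 1
        have : (((⟨(r:ℕ)-1, hr1⟩ : Fin p) : ℕ) : B) = ((r:ℕ) : B) - 1 := by
          have : ((⟨(r:ℕ)-1, hr1⟩ : Fin p) : ℕ) + 1 = (r:ℕ) := by simp; omega
          have h2 := congrArg (fun n : ℕ => (n : B)) this
          push_cast at h2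
          linear_combination h2
        rw [this]
        ring
      · intro k _ hk
        rw [hA, if_neg (by
          intro hh
          refine hk (Fin.ext ?_)
          simp
          omega), zero_mul]
      · intro hmem; exact absurd (Finset.mem_univ _) hmem
  -- factors
  set fac : ℕ → Matrix (Fin p) (Fin p) B := fun k => W - ((k : B) * e) • 1 with hfacdef
  have hfacL : ∀ k, fac k ∈ L := by
    intro k
    exact sub_mem hWL (L.smul_mem L.one_mem _)
  have hfaclow : ∀ k, ∀ r c : Fin p, (r:ℕ) < (c:ℕ) → fac k r c = 0 := by
    intro k r c hrc
    rw [hfacdef]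
    simp only [Matrix.sub_apply, Matrix.smul_apply]
    rw [hW, hHlow r c hrc, mul_zero, Matrix.one_apply_ne (fun hh => by
      rw [hh] at hrc; omega), smul_zero, sub_zero]
  have hfacdiag : ∀ k (j : Fin p), fac k j j = (((j:ℕ) : B) - (k : B)) * e := by
    intro k j
    rw [hfacdef]
    simp only [Matrix.sub_apply, Matrix.smul_apply]
    rw [hW, hHdiag, Matrix.one_apply_eq, smul_eq_mul, mul_one, sub_mul]
  -- std helpers
  have hstd : ∀ (r c : Fin p) (b : B),
      Matrix.single r c b = b • Matrix.single r c (1:B) := by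
    intro r c b
    rw [Matrix.smul_single, smul_eq_mul, mul_one]
  have hrowmul : ∀ (r j : Fin p) (Mm : Matrix (Fin p) (Fin p) B),
      Matrix.single r j (1:B) * Mm
        = ∑ c' : Fin p, Matrix.single r c' (Mm j c') := by
    intro r j Mm
    ext a b
    rw [Matrix.mul_apply, Matrix.sum_apply]
    by_cases har : a = r
    · subst har
      rw [Finset.sum_eq_single j, Finset.sum_eq_single b]
      · rw [Matrix.single_apply_same, Matrix.single_apply_same, one_mul]
      · intro k _ hk
        exact Matrix.single_apply_of_ne _ _ _ _ _ (by rintro ⟨-, rfl⟩; exact hk rfl)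
      · intro hmem; exact absurd (Finset.mem_univ _) hmem
      · intro k _ hk
        rw [Matrix.single_apply_of_ne _ _ _ _ _ (by rintro ⟨-, rfl⟩; exact hk rfl),
          zero_mul]
      · intro hmem; exact absurd (Finset.mem_univ _) hmem
    · rw [Finset.sum_eq_zero, Finset.sum_eq_zero]
      · intro k _
        exact Matrix.single_apply_of_ne _ _ _ _ _ (by rintro ⟨rfl, -⟩; exact har rfl)
      · intro k _
        rw [Matrix.single_apply_of_ne _ _ _ _ _ (by rintro ⟨rfl, -⟩; exact har rfl),
          zero_mul]
  -- key claim
  have key : ∀ ℓ : ℕ, ∀ r c : Fin p, (p - 1 + (c:ℕ)) - (r:ℕ) = ℓ →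
      e ^ ℓ • Matrix.single r c (1:B) ∈ L := by
    intro ℓ
    induction ℓ using Nat.strong_induction_on with
    | _ ℓ IH =>
    intro r c hℓ
    have hrp := r.isLt
    have hcp := c.isLt
    by_cases hrc : (c:ℕ) ≤ (r:ℕ)
    · -- LOWER-TRIANGULAR CASE
      set d : ℕ := (r:ℕ) - (c:ℕ) with hd
      have hℓd : ℓ = p - 1 - d := by omega
      set ks : List ℕ := (List.range (p - d)).erase (c:ℕ) with hks
      have hcmem : (c:ℕ) ∈ List.range (p - d) := List.mem_range.mpr (by omega)
      have hklen : ks.length = ℓ := by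
        rw [hks, List.length_erase_of_mem hcmem, List.length_range]; omega
      have hkmem : ∀ k : ℕ, k ∈ ks ↔ k ≠ (c:ℕ) ∧ k < p - d := by
        intro k
        rw [hks, List.nodup_range.mem_erase_iff, List.mem_range]
      set l : List (Matrix (Fin p) (Fin p) B) := ks.map fac with hl
      have hllen : l.length = ℓ := by rw [hl, List.length_map, hklen]
      have hlow : ∀ m ∈ l, ∀ r' c' : Fin p, (r':ℕ) < (c':ℕ) → m r' c' = 0 := by
        intro m hm
        obtain ⟨k, -, rfl⟩ := List.mem_map.mp hm
        exact hfaclow k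
      have hdiagdvd : ∀ m ∈ l, ∀ jj : Fin p, e ∣ m jj jj := by
        intro m hm jj
        obtain ⟨k, -, rfl⟩ := List.mem_map.mp hm
        rw [hfacdiag]
        exact dvd_mul_left e _
      set Q : Matrix (Fin p) (Fin p) B := l.prod with hQ
      have hQL : Q ∈ L := L.list_prod_mem (by
        intro x hx
        obtain ⟨k, -, rfl⟩ := List.mem_map.mp hx
        exact hfacL k)
      set G : Matrix (Fin p) (Fin p) B := A0 ^ d * Q with hG
      have hGL : G ∈ L := mul_mem (pow_mem hA0L d) hQL
      have hApow := aux_A0_pow A0 hA d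
      have hGentry : ∀ (r' c' : Fin p) (hd' : d ≤ (r':ℕ)),
          G r' c' = Q ⟨(r':ℕ) - d, Nat.lt_of_le_of_lt (Nat.sub_le _ _) r'.isLt⟩ c' := by
        intro r' c' hd'
        rw [hG, Matrix.mul_apply, Finset.sum_eq_single
          (⟨(r':ℕ) - d, Nat.lt_of_le_of_lt (Nat.sub_le _ _) r'.isLt⟩ : Fin p)]
        · rw [hApow, if_pos (by simp; omega), one_mul]
        · intro k _ hk
          rw [hApow, if_neg (by
            intro hh
            refine hk (Fin.ext ?_)
            simp
            omega), zero_mul]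
        · intro hmem; exact absurd (Finset.mem_univ _) hmem
      have hGzero : ∀ (r' c' : Fin p), (r':ℕ) < d → G r' c' = 0 := by
        intro r' c' hlt
        rw [hG, Matrix.mul_apply]
        apply Finset.sum_eq_zero
        intro k _
        rw [hApow, if_neg (by omega), zero_mul]
      set u : B := (ks.map (fun k : ℕ => ((c:ℕ) : B) - ((k:ℕ) : B))).prod with hu
      have hspike : G r c = e ^ ℓ * u := by
        have h1 := hGentry r c (by omega)
        have h2 : (⟨(r:ℕ)-d, Nat.lt_of_le_of_lt (Nat.sub_le _ _) r.isLt⟩ : Fin p) = c :=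
          Fin.ext (by simp; omega)
        rw [h1, h2, hQ, aux_prod_diag l hlow c, hl, List.map_map]
        have h3 : ((fun m : Matrix (Fin p) (Fin p) B => m c c) ∘ fac) =
            fun k : ℕ => (((c:ℕ) : B) - ((k:ℕ) : B)) * e := by
          funext k; exact hfacdiag k c
        rw [h3, List.prod_map_mul]
        have h4 : (ks.map (fun _ : ℕ => e)).prod = e ^ ℓ := by
          rw [List.map_const', List.prod_replicate, hklen]
        rw [h4, hu, mul_comm]
      have huu : IsUnit u := by
        rw [hu]
        apply List.prod_isUnit
        intro x hx
        obtain ⟨k, hk, rfl⟩ := List.mem_map.mp hx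
        rw [hkmem] at hk
        exact hunit (c:ℕ) k hcp (by omega) (by omega)
      have hgarb : ∀ (r' c' : Fin p), ¬(r' = r ∧ c' = c) →
          Matrix.single r' c' (G r' c') ∈ L := by
        intro r' c' hne
        by_cases h1 : d ≤ (r':ℕ)
        · have hGe := hGentry r' c' h1
          set a : Fin p := ⟨(r':ℕ)-d, Nat.lt_of_le_of_lt (Nat.sub_le _ _) r'.isLt⟩ with ha
          have hav : (a:ℕ) = (r':ℕ) - d := rfl
          by_cases h2 : (a:ℕ) < (c':ℕ)
          · rw [hGe, hQ, aux_prod_low l hlow a c' h2, Matrix.single_zero]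
            exact zero_mem L
          by_cases h3 : (a:ℕ) = (c':ℕ)
          · have hac : a = c' := Fin.ext h3
            by_cases h4 : (c':ℕ) = (c:ℕ)
            · exfalso
              exact hne ⟨Fin.ext (by omega), Fin.ext h4⟩
            · have h5 : Q c' c' = 0 := by
                rw [hQ, aux_prod_diag l hlow c', hl, List.map_map]
                apply List.prod_eq_zero
                refine List.mem_map.mpr ⟨(c':ℕ), ?_, ?_⟩
                · rw [hkmem]
                  refine ⟨h4, ?_⟩
                  have := c'.isLt
                  omega
                · show fac (c':ℕ) c' c' = 0
                  rw [hfacdiag, sub_self, zero_mul]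
              rw [hGe, hac, h5, Matrix.single_zero]
              exact zero_mem L
          · have h6 : (c':ℕ) < (a:ℕ) := by omega
            have hdvd := aux_prod_dvd e l hlow hdiagdvd a c'
            have hexp : l.length - ((a:ℕ) - (c':ℕ)) = (p - 1 + (c':ℕ)) - (r':ℕ) := by
              rw [hllen, hav]
              have := c'.isLt
              omega
            rw [hexp] at hdvd
            obtain ⟨g, hg⟩ := hdvd
            have hlt : (p - 1 + (c':ℕ)) - (r':ℕ) < ℓ := by
              have := c'.isLt
              omega
            rw [hGe, hQ, hg, hstd]
            have heq : (e ^ ((p - 1 + (c':ℕ)) - (r':ℕ)) * g) • Matrix.single r' c' (1:B)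
                = g • (e ^ ((p - 1 + (c':ℕ)) - (r':ℕ)) • Matrix.single r' c' (1:B)) := by
              rw [smul_smul, mul_comm]
            rw [heq]
            exact L.smul_mem (IH _ hlt r' c' rfl) g
        · rw [hGzero r' c' (by omega), Matrix.single_zero]
          exact zero_mem L
      set R : Matrix (Fin p) (Fin p) B := ∑ r' : Fin p, ∑ c' : Fin p,
        if (r' = r ∧ c' = c) then 0 else Matrix.single r' c' (G r' c') with hR
      have hRL : R ∈ L := by
        apply sum_mem; intro r' _
        apply sum_mem; intro c' _
        split
        · exact zero_mem L
        · exact hgarb r' c' (by assumption)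
      have hfirst : (∑ r' : Fin p, ∑ c' : Fin p,
          if (r' = r ∧ c' = c) then Matrix.single r' c' (G r' c') else 0)
          = Matrix.single r c (G r c) := by
        rw [Finset.sum_eq_single r]
        · rw [Finset.sum_eq_single c]
          · rw [if_pos ⟨rfl, rfl⟩]
          · intro c' _ hc'; rw [if_neg (by tauto)]
          · intro hmem; exact absurd (Finset.mem_univ _) hmem
        · intro r' _ hr'
          apply Finset.sum_eq_zero; intro c' _; rw [if_neg (by tauto)]
        · intro hmem; exact absurd (Finset.mem_univ _) hmem
      have hGsum : G = Matrix.single r c (G r c) + R := by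
        conv_lhs => rw [Matrix.matrix_eq_sum_single G]
        rw [hR, ← hfirst, ← Finset.sum_add_distrib]
        apply Finset.sum_congr rfl
        intro r' _
        rw [← Finset.sum_add_distrib]
        apply Finset.sum_congr rfl
        intro c' _
        split <;> simp
      have hstdmem : Matrix.single r c (G r c) ∈ L := by
        have heq2 : Matrix.single r c (G r c) = G - R :=
          eq_sub_of_add_eq hGsum.symm
        rw [heq2]
        exact sub_mem hGL hRL
      obtain ⟨v, hv⟩ := huu
      have hfin : e ^ ℓ • Matrix.single r c (1:B)
          = ((v⁻¹ : Bˣ) : B) • Matrix.single r c (G r c) := by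
        rw [hspike, hstd r c (e ^ ℓ * u), smul_smul, ← hv]
        congr 1
        rw [mul_comm (e ^ ℓ) ((v : B)), ← mul_assoc, Units.inv_mul, one_mul]
      rw [hfin]
      exact L.smul_mem hstdmem _
    · -- UPPER-TRIANGULAR CASE
      push_neg at hrc
      have hc1 : 1 ≤ (c:ℕ) := by omega
      have hjlt : (c:ℕ) - 1 < p := by omega
      set j : Fin p := ⟨(c:ℕ)-1, hjlt⟩ with hj
      have hjc : (j:ℕ) + 1 = (c:ℕ) := by rw [hj]; simp; omega
      have hℓ1 : (p - 1 + (j:ℕ)) - (r:ℕ) = ℓ - 1 := by rw [hj]; simp; omega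
      have hℓpos : 1 ≤ ℓ := by omega
      have hT : e ^ (ℓ-1) • Matrix.single r j (1:B) ∈ L :=
        IH (ℓ-1) (by omega) r j hℓ1
      have hZ : (e ^ (ℓ-1) • Matrix.single r j (1:B)) * Dα ∈ L := mul_mem hT hDL
      have hZeq : (e ^ (ℓ-1) • Matrix.single r j (1:B)) * Dα
          = ∑ c' : Fin p, e ^ (ℓ-1) • Matrix.single r c' (Dα j c') := by
        rw [smul_mul_assoc, hrowmul, Finset.smul_sum]
      have hgarb : ∀ c' : Fin p, ¬(c' = c) →
          e ^ (ℓ-1) • Matrix.single r c' (Dα j c') ∈ L := by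
        intro c' hne
        have hDval := hDrow j c hjc c'
        have hnev : (c':ℕ) ≠ (c:ℕ) := fun hh => hne (Fin.ext hh)
        by_cases hgt : (c:ℕ) < (c':ℕ)
        · rw [hDval, hHlow c c' hgt, mul_zero, Matrix.single_zero, smul_zero]
          exact zero_mem L
        · have hlt : (c':ℕ) < (c:ℕ) := by omega
          have hlt2 : (p - 1 + (c':ℕ)) - (r:ℕ) < ℓ := by omega
          have hmem := IH _ hlt2 r c' rfl
          have heq : e ^ (ℓ-1) • Matrix.single r c' (Dα j c')
              = (Dα j c' * e ^ ((ℓ-1) - ((p - 1 + (c':ℕ)) - (r:ℕ)))) •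
                (e ^ ((p - 1 + (c':ℕ)) - (r:ℕ)) • Matrix.single r c' (1:B)) := by
            rw [hstd, smul_smul, smul_smul]
            congr 1
            rw [mul_assoc, ← pow_add]
            have hadd : (ℓ - 1 - ((p - 1 + (c':ℕ)) - (r:ℕ)))
                + ((p - 1 + (c':ℕ)) - (r:ℕ)) = ℓ - 1 := by omega
            rw [hadd, mul_comm]
          rw [heq]
          exact L.smul_mem hmem _
      set R : Matrix (Fin p) (Fin p) B := ∑ c' : Fin p,
        if c' = c then 0 else e ^ (ℓ-1) • Matrix.single r c' (Dα j c') with hR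
      have hRL : R ∈ L := by
        apply sum_mem; intro c' _
        split
        · exact zero_mem L
        · exact hgarb c' (by assumption)
      have hfirst : (∑ c' : Fin p,
          if c' = c then e ^ (ℓ-1) • Matrix.single r c' (Dα j c') else 0)
          = e ^ (ℓ-1) • Matrix.single r c (Dα j c) := by
        rw [Finset.sum_eq_single c]
        · rw [if_pos rfl]
        · intro c' _ hc'; rw [if_neg hc']
        · intro hmem; exact absurd (Finset.mem_univ _) hmem
      have hsum : (∑ c' : Fin p, e ^ (ℓ-1) • Matrix.single r c' (Dα j c'))
          = e ^ (ℓ-1) • Matrix.single r c (Dα j c) + R := by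
        rw [hR, ← hfirst, ← Finset.sum_add_distrib]
        apply Finset.sum_congr rfl
        intro c' _
        split <;> simp
      have hspikemem : e ^ (ℓ-1) • Matrix.single r c (Dα j c) ∈ L := by
        have heq2 : e ^ (ℓ-1) • Matrix.single r c (Dα j c)
            = (e ^ (ℓ-1) • Matrix.single r j (1:B)) * Dα - R :=
          eq_sub_of_add_eq (hZeq.trans hsum).symm
        rw [heq2]
        exact sub_mem hZ hRL
      have hDspike : Dα j c = ((c:ℕ) : B) * e := by
        rw [hDrow j c hjc c, hHdiag]
        congr 1
        have hcast := congrArg (fun n : ℕ => (n:B)) hjc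
        push_cast at hcast
        linear_combination hcast
      have hcu : IsUnit ((c:ℕ) : B) := by
        have := hunit (c:ℕ) 0 hcp hp0 (by omega)
        simpa using this
      obtain ⟨v, hv⟩ := hcu
      have hℓe : e ^ (ℓ-1) * e = e ^ ℓ := by
        rw [← pow_succ]
        congr 1
        omega
      have hfin : e ^ ℓ • Matrix.single r c (1:B)
          = ((v⁻¹ : Bˣ) : B) • (e ^ (ℓ-1) • Matrix.single r c (Dα j c)) := by
        rw [hDspike, hstd r c (((c:ℕ) : B) * e), smul_smul, smul_smul, ← hv]
        congr 1
        calc e ^ ℓ = (↑v⁻¹ * ↑v) * e ^ ℓ := by rw [Units.inv_mul, one_mul]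
          _ = ↑v⁻¹ * e ^ (ℓ-1) * (↑v * e) := by rw [← hℓe]; ring
      rw [hfin]
      exact L.smul_mem hspikemem _
  -- conclusion
  have hM : e ^ (2 * (p-1)) • M = ∑ r : Fin p, ∑ c : Fin p,
      e ^ (2 * (p-1)) • Matrix.single r c (M r c) := by
    conv_lhs => rw [Matrix.matrix_eq_sum_single M]
    rw [Finset.smul_sum]
    apply Finset.sum_congr rfl
    intro r _
    rw [Finset.smul_sum]
  rw [hM]
  apply sum_mem
  intro r _
  apply sum_mem
  intro c _
  have hlle : (p - 1 + (c:ℕ)) - (r:ℕ) ≤ 2 * (p-1) := by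
    have := c.isLt; have := r.isLt; omega
  rw [hstd r c (M r c)]
  have : e ^ (2*(p-1)) • (M r c) • Matrix.single r c (1:B)
      = (M r c * e ^ (2*(p-1) - ((p - 1 + (c:ℕ)) - (r:ℕ)))) •
        (e ^ ((p - 1 + (c:ℕ)) - (r:ℕ)) • Matrix.single r c (1:B)) := by
    have hexp : 2*(p-1) = (2 * (p-1) - ((p - 1 + (c:ℕ)) - (r:ℕ)))
        + ((p - 1 + (c:ℕ)) - (r:ℕ)) := by omega
    rw [smul_smul, smul_smul]
    congr 1
    rw [mul_assoc, ← pow_add, ← hexp, mul_comm]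
  rw [this]
  exact L.smul_mem (key _ r c rfl) _
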